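/- arXiv:2312.15385 — 2 statements merged into one kernel-verified Lean document; each statement's English description precedes it below -/
import Mathlib

section
/- (One-step exploratory MV value) Let a, w, x ∈ ℝ, σ > 0, λ > 0, r_f > 0. Define J(π) = E[(r_f x + r U - w)²] + λ ∫ π(u) ln π(u) du - (w-b)², where r has mean a and variance σ², U has density π independent of r. Then the minimizing π is the Gaussian N(-a(r_f x - w)/(a²+σ²), λ/(2(a²+σ²))), and the minimum value equals (σ²/(a²+σ²))(r_f x - w)² + (λ/2) ln((a²+σ²)/(πλ)) - (w-b)². -/
open MeasureTheory Real

/-- Gaussian density with mean `m` and variance `s2`. -/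
noncomputable def gaussPdf (m s2 u : ℝ) : ℝ :=
  (Real.sqrt (2 * Real.pi * s2))⁻¹ * Real.exp (-(u - m) ^ 2 / (2 * s2))

/-- A probability density on ℝ. -/
def IsDensity (p : ℝ → ℝ) : Prop := (∀ u, 0 ≤ p u) ∧ (∫ u, p u) = 1

/-- One-step exploratory MV value:
`J(p) = E[(r_f x + r U - w)²] + λ ∫ p ln p - (w-b)²` with `U ~ p` independent of `r`. -/
noncomputable def oneStepJ {Ω : Type*} [MeasurableSpace Ω] (μ : Measure Ω)
    (r : Ω → ℝ) (rf lam x w b : ℝ) (p : ℝ → ℝ) : ℝ :=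
  (∫ ω, ∫ u, (rf * x + r ω * u - w) ^ 2 * p u ∂volume ∂μ) +
    lam * (∫ u, p u * Real.log (p u)) - (w - b) ^ 2

/-!
Write `A = r_f x - w` and `c = a² + σ² = E[r²]`. Completing the square in `U`,
`E[(A + rU)²] = σ²A²/c + c E[(U - m)²]` with `m = -aA/c`. For the Gaussian density `q` with
mean `m` and variance `λ/(2c)` one has `-λ ln q(u) = (λ/2) ln(πλ/c) + c (u - m)²`, hence
`J(p) = σ²A²/c + (λ/2) ln(c/(πλ)) - (w - b)² + λ ∫ p ln (p/q)`.
The last term is a Kullback–Leibler divergence: nonnegative by Gibbs' inequality, zero at `p = q`.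
-/

open ProbabilityTheory NNReal

section Gaussian

variable {m s2 : ℝ}

lemma gaussPdf_eq_gaussianPDFReal (hs2 : 0 ≤ s2) :
    gaussPdf m s2 = gaussianPDFReal m s2.toNNReal := by
  funext u
  simp [gaussPdf, gaussianPDFReal, Real.coe_toNNReal _ hs2]

lemma gaussPdf_pos (hs2 : 0 < s2) (u : ℝ) : 0 < gaussPdf m s2 u := by
  rw [gaussPdf_eq_gaussianPDFReal hs2.le]
  exact gaussianPDFReal_pos _ _ _ (by simpa using hs2)

lemma isDensity_gaussPdf (hs2 : 0 < s2) : IsDensity (gaussPdf m s2) := by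
  refine ⟨fun u => (gaussPdf_pos hs2 u).le, ?_⟩
  rw [gaussPdf_eq_gaussianPDFReal hs2.le]
  exact integral_gaussianPDFReal_eq_one _ (by simpa using hs2)

lemma log_gaussPdf (hs2 : 0 < s2) (u : ℝ) :
    Real.log (gaussPdf m s2 u) = -Real.log (2 * π * s2) / 2 - (u - m) ^ 2 / (2 * s2) := by
  have h2 : 0 < 2 * π * s2 := by positivity
  rw [gaussPdf, Real.log_mul (by positivity) (Real.exp_ne_zero _), Real.log_inv, Real.log_exp,
    Real.log_sqrt h2.le]
  ring

lemma integrable_mul_gaussianPDFReal {v : ℝ≥0} {g : ℝ → ℝ}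
    (hg : Integrable g (gaussianReal m v)) : Integrable (fun u => g u * gaussianPDFReal m v u) := by
  rcases eq_or_ne v 0 with rfl | hv
  · simp
  rw [gaussianReal_of_var_ne_zero _ hv, integrable_withDensity_iff (measurable_gaussianPDF _ _)
    (ae_of_all _ fun _ => ENNReal.ofReal_lt_top)] at hg
  simpa [gaussianPDF, ENNReal.toReal_ofReal (gaussianPDFReal_nonneg _ _ _)] using hg

lemma integrable_sq_mul_gaussPdf (hs2 : 0 ≤ s2) :
    Integrable (fun u => u ^ 2 * gaussPdf m s2 u) := by
  rw [gaussPdf_eq_gaussianPDFReal hs2]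
  exact integrable_mul_gaussianPDFReal (memLp_id_gaussianReal 2).integrable_sq

end Gaussian

section Density

variable {p : ℝ → ℝ}

lemma integrable_mul_of_integrable_sq_mul (hp : Integrable p)
    (h2 : Integrable fun u => u ^ 2 * p u) : Integrable fun u => u * p u := by
  refine (hp.norm.add h2.norm).mono' (aestronglyMeasurable_id.mul hp.1) (ae_of_all _ fun u => ?_)
  have hu : |u| ≤ 1 + u ^ 2 := by nlinarith [sq_nonneg (|u| - 1), sq_abs u]
  simp only [Pi.add_apply, norm_mul, Real.norm_eq_abs, abs_pow, sq_abs]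
  nlinarith [mul_le_mul_of_nonneg_right hu (abs_nonneg (p u))]

lemma integrable_affine_sq_mul (hp : Integrable p) (h2 : Integrable fun u => u ^ 2 * p u)
    (α β : ℝ) : Integrable fun u => (α + β * u) ^ 2 * p u := by
  have h1 := integrable_mul_of_integrable_sq_mul hp h2
  refine ((hp.const_mul (α ^ 2)).add ((h1.const_mul (2 * α * β)).add (h2.const_mul (β ^ 2)))).congr
    (ae_of_all _ fun u => ?_)
  simp only [Pi.add_apply]
  ring

lemma integrable_sub_sq_mul (hp : Integrable p) (h2 : Integrable fun u => u ^ 2 * p u)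
    (m : ℝ) : Integrable fun u => (u - m) ^ 2 * p u :=
  (integrable_affine_sq_mul hp h2 (-m) 1).congr (ae_of_all _ fun u => by ring)

lemma integral_affine_sq_mul (hp : ∫ u, p u = 1) (h2 : Integrable fun u => u ^ 2 * p u)
    (α β : ℝ) :
    ∫ u, (α + β * u) ^ 2 * p u =
      α ^ 2 + 2 * α * β * (∫ u, u * p u) + β ^ 2 * ∫ u, u ^ 2 * p u := by
  have hp' := integrable_of_integral_eq_one hp
  have h1 := integrable_mul_of_integrable_sq_mul hp' h2
  have expand : (fun u => (α + β * u) ^ 2 * p u) =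
      fun u => α ^ 2 * p u + (2 * α * β * (u * p u) + β ^ 2 * (u ^ 2 * p u)) := by
    funext u; ring
  rw [expand, integral_add (hp'.const_mul _) ((h1.const_mul _).fun_add (h2.const_mul _)),
    integral_add (h1.const_mul _) (h2.const_mul _), integral_const_mul, integral_const_mul,
    integral_const_mul, hp, mul_one, add_assoc]

lemma integral_mul_log_sub_log_nonneg {q : ℝ → ℝ} (hp : IsDensity p) (hq : IsDensity q)
    (hq_pos : ∀ u, 0 < q u) (h : Integrable fun u => p u * (Real.log (p u) - Real.log (q u))) :
    0 ≤ ∫ u, p u * (Real.log (p u) - Real.log (q u)) := by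
  have hp' := integrable_of_integral_eq_one hp.2
  have hq' := integrable_of_integral_eq_one hq.2
  have pointwise : ∀ u, p u - q u ≤ p u * (Real.log (p u) - Real.log (q u)) := by
    intro u
    rcases (hp.1 u).eq_or_lt with hpu | hpu
    · rw [← hpu]; simpa using (hq_pos u).le
    have := Real.one_sub_inv_le_log_of_pos (div_pos hpu (hq_pos u))
    rw [Real.log_div hpu.ne' (hq_pos u).ne', inv_div] at this
    calc p u - q u = p u * (1 - q u / p u) := by field_simp
      _ ≤ _ := mul_le_mul_of_nonneg_left this hpu.le
  calc (0 : ℝ) = ∫ u, (p u - q u) := by rw [integral_sub hp' hq', hp.2, hq.2, sub_self]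
    _ ≤ _ := integral_mono (hp'.sub hq') h pointwise

end Density

section LogGaussian

variable {p : ℝ → ℝ} {m s2 : ℝ}

lemma mul_log_gaussPdf_eq (hs2 : 0 < s2) (u : ℝ) :
    p u * Real.log (gaussPdf m s2 u) =
      -Real.log (2 * π * s2) / 2 * p u - (2 * s2)⁻¹ * ((u - m) ^ 2 * p u) := by
  rw [log_gaussPdf hs2]
  ring

lemma integrable_mul_log_gaussPdf (hs2 : 0 < s2) (hp : Integrable p)
    (h2 : Integrable fun u => u ^ 2 * p u) :
    Integrable fun u => p u * Real.log (gaussPdf m s2 u) := by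
  simp_rw [mul_log_gaussPdf_eq hs2]
  exact (hp.const_mul _).sub ((integrable_sub_sq_mul hp h2 m).const_mul _)

lemma integral_mul_log_gaussPdf (hs2 : 0 < s2) (hp : ∫ u, p u = 1)
    (h2 : Integrable fun u => u ^ 2 * p u) :
    ∫ u, p u * Real.log (gaussPdf m s2 u) =
      -Real.log (2 * π * s2) / 2 - (2 * s2)⁻¹ * ∫ u, (u - m) ^ 2 * p u := by
  have hp' := integrable_of_integral_eq_one hp
  simp_rw [mul_log_gaussPdf_eq hs2]
  rw [integral_sub (hp'.const_mul _) ((integrable_sub_sq_mul hp' h2 m).const_mul _),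
    integral_const_mul, integral_const_mul, hp, mul_one]

lemma integral_mul_log_sub_log_gaussPdf_nonneg (hs2 : 0 < s2) (hp : IsDensity p)
    (h2 : Integrable fun u => u ^ 2 * p u) (hent : Integrable fun u => p u * Real.log (p u)) :
    0 ≤ ∫ u, p u * (Real.log (p u) - Real.log (gaussPdf m s2 u)) := by
  refine integral_mul_log_sub_log_nonneg hp (isDensity_gaussPdf hs2) (gaussPdf_pos hs2) ?_
  simp_rw [mul_sub]
  exact hent.sub (integrable_mul_log_gaussPdf hs2 (integrable_of_integral_eq_one hp.2) h2)

end LogGaussian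

lemma integral_integral_affine_sq_mul {Ω : Type*} [MeasurableSpace Ω] {μ : Measure Ω}
    [IsProbabilityMeasure μ] {r : Ω → ℝ} (hr : MemLp r 2 μ) {p : ℝ → ℝ} (hp : ∫ u, p u = 1)
    (h2 : Integrable fun u => u ^ 2 * p u) (A : ℝ) :
    ∫ ω, (∫ u, (A + r ω * u) ^ 2 * p u) ∂μ =
      A ^ 2 + 2 * A * (∫ ω, r ω ∂μ) * (∫ u, u * p u) +
        (∫ ω, r ω ^ 2 ∂μ) * ∫ u, u ^ 2 * p u := by
  have hlin : Integrable (fun ω => 2 * A * (∫ u, u * p u) * r ω) μ :=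
    (hr.integrable one_le_two).const_mul _
  have hsq : Integrable (fun ω => (∫ u, u ^ 2 * p u) * r ω ^ 2) μ := hr.integrable_sq.const_mul _
  have expand : (fun ω => ∫ u, (A + r ω * u) ^ 2 * p u) = fun ω =>
      A ^ 2 + (2 * A * (∫ u, u * p u) * r ω + (∫ u, u ^ 2 * p u) * r ω ^ 2) := by
    funext ω
    rw [integral_affine_sq_mul hp h2]
    ring
  rw [expand, integral_add (integrable_const _) (hlin.fun_add hsq), integral_add hlin hsq,
    integral_const, integral_const_mul, integral_const_mul]
  simp only [probReal_univ, one_smul]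
  ring

lemma oneStepJ_eq_add_integral_mul_log_sub_log {Ω : Type*} [MeasurableSpace Ω] {μ : Measure Ω}
    [IsProbabilityMeasure μ] {r : Ω → ℝ} (hmeas : Measurable r) {a σ rf lam x w b : ℝ}
    (hσ : σ ≠ 0) (hlam : 0 < lam) (hr2 : Integrable (fun ω => r ω ^ 2) μ)
    (hra : ∫ ω, r ω ∂μ = a) (hrv : ∫ ω, r ω ^ 2 ∂μ = a ^ 2 + σ ^ 2)
    {p : ℝ → ℝ} (hp : IsDensity p) (h2 : Integrable fun u => u ^ 2 * p u)
    (hent : Integrable fun u => p u * Real.log (p u)) :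
    oneStepJ μ r rf lam x w b p =
      σ ^ 2 / (a ^ 2 + σ ^ 2) * (rf * x - w) ^ 2 +
        lam / 2 * Real.log ((a ^ 2 + σ ^ 2) / (π * lam)) - (w - b) ^ 2 +
      lam * ∫ u, p u * (Real.log (p u) - Real.log
        (gaussPdf (-(a * (rf * x - w)) / (a ^ 2 + σ ^ 2)) (lam / (2 * (a ^ 2 + σ ^ 2))) u)) := by
  set c := a ^ 2 + σ ^ 2
  set A := rf * x - w
  set m := -(a * A) / c
  set s2 := lam / (2 * c)
  have hc : 0 < c := by positivity
  have hs2 : 0 < s2 := by positivity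
  have hV : ∫ u, (u - m) ^ 2 * p u = m ^ 2 - 2 * m * (∫ u, u * p u) + ∫ u, u ^ 2 * p u := by
    simp_rw [show ∀ u, (u - m) ^ 2 * p u = (-m + 1 * u) ^ 2 * p u from fun u => by ring,
      integral_affine_sq_mul hp.2 h2]
    ring
  have hquad : ∫ ω, (∫ u, (rf * x + r ω * u - w) ^ 2 * p u) ∂μ =
      A ^ 2 + 2 * A * a * (∫ u, u * p u) + c * ∫ u, u ^ 2 * p u := by
    have hr : MemLp r 2 μ := (memLp_two_iff_integrable_sq hmeas.aestronglyMeasurable).2 hr2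
    simp_rw [show ∀ ω u, rf * x + r ω * u - w = A + r ω * u from fun _ _ => by ring]
    rw [integral_integral_affine_sq_mul hr hp.2 h2, hra, hrv]
  have hent_split : ∫ u, p u * Real.log (p u) =
      (∫ u, p u * (Real.log (p u) - Real.log (gaussPdf m s2 u))) +
        ∫ u, p u * Real.log (gaussPdf m s2 u) := by
    have hq := integrable_mul_log_gaussPdf (m := m) hs2 (integrable_of_integral_eq_one hp.2) h2
    simp_rw [mul_sub]
    rw [integral_sub hent hq, sub_add_cancel]
  have hlog : Real.log (2 * π * s2) = -Real.log (c / (π * lam)) := by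
    rw [← Real.log_inv, inv_div]
    congr 1
    simp only [s2]
    field_simp
  rw [oneStepJ, hquad, hent_split, integral_mul_log_gaussPdf hs2 hp.2 h2, hV, hlog]
  simp only [m, s2, c] at hc ⊢
  field_simp
  ring

theorem stmt4_general {Ω : Type*} [MeasurableSpace Ω] (μ : Measure Ω) [IsProbabilityMeasure μ]
    (r : Ω → ℝ) (hmeas : Measurable r)
    (a σ rf lam x w b : ℝ) (hσ : 0 < σ) (hlam : 0 < lam)
    (hr2 : Integrable (fun ω => (r ω) ^ 2) μ)
    (hra : ∫ ω, r ω ∂μ = a)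
    (hrv : ∫ ω, (r ω) ^ 2 ∂μ = a ^ 2 + σ ^ 2) :
    -- the Gaussian N(-a(r_f x - w)/(a²+σ²), λ/(2(a²+σ²))) minimizes J
    (∀ p : ℝ → ℝ, IsDensity p →
      Integrable (fun u => u ^ 2 * p u) →
      Integrable (fun u => p u * Real.log (p u)) →
      oneStepJ μ r rf lam x w b
          (gaussPdf (-(a * (rf * x - w)) / (a ^ 2 + σ ^ 2)) (lam / (2 * (a ^ 2 + σ ^ 2)))) ≤
        oneStepJ μ r rf lam x w b p) ∧
    -- and the minimum value is the claimed one
    oneStepJ μ r rf lam x w b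
        (gaussPdf (-(a * (rf * x - w)) / (a ^ 2 + σ ^ 2)) (lam / (2 * (a ^ 2 + σ ^ 2)))) =
      σ ^ 2 / (a ^ 2 + σ ^ 2) * (rf * x - w) ^ 2 +
        lam / 2 * Real.log ((a ^ 2 + σ ^ 2) / (Real.pi * lam)) - (w - b) ^ 2 := by
  set m := -(a * (rf * x - w)) / (a ^ 2 + σ ^ 2)
  set s2 := lam / (2 * (a ^ 2 + σ ^ 2))
  have hs2 : 0 < s2 := by positivity
  have hq := isDensity_gaussPdf (m := m) hs2
  have hq2 := integrable_sq_mul_gaussPdf (m := m) hs2.le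
  have hq_log : Integrable fun u => gaussPdf m s2 u * Real.log (gaussPdf m s2 u) :=
    integrable_mul_log_gaussPdf hs2 (integrable_of_integral_eq_one hq.2) hq2
  have hJq : oneStepJ μ r rf lam x w b (gaussPdf m s2) =
      σ ^ 2 / (a ^ 2 + σ ^ 2) * (rf * x - w) ^ 2 +
        lam / 2 * Real.log ((a ^ 2 + σ ^ 2) / (π * lam)) - (w - b) ^ 2 := by
    rw [oneStepJ_eq_add_integral_mul_log_sub_log hmeas hσ.ne' hlam hr2 hra hrv hq hq2 hq_log]
    simp only [m, s2, sub_self, mul_zero, integral_zero, add_zero]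
  refine ⟨fun p hp h2 hent => ?_, hJq⟩
  rw [hJq, oneStepJ_eq_add_integral_mul_log_sub_log hmeas hσ.ne' hlam hr2 hra hrv hp h2 hent,
    le_add_iff_nonneg_right]
  exact mul_nonneg hlam.le (integral_mul_log_sub_log_gaussPdf_nonneg hs2 hp h2 hent)

theorem stmt4 {Ω : Type*} [MeasurableSpace Ω] (μ : Measure Ω) [IsProbabilityMeasure μ]
    (r : Ω → ℝ) (hmeas : Measurable r)
    (a σ rf lam x w b : ℝ) (hσ : 0 < σ) (hlam : 0 < lam) (hrf : 0 < rf)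
    (hr2 : Integrable (fun ω => (r ω) ^ 2) μ)
    (hra : ∫ ω, r ω ∂μ = a)
    (hrv : ∫ ω, (r ω) ^ 2 ∂μ = a ^ 2 + σ ^ 2) :
    -- the Gaussian N(-a(r_f x - w)/(a²+σ²), λ/(2(a²+σ²))) minimizes J
    (∀ p : ℝ → ℝ, IsDensity p →
      Integrable (fun u => u ^ 2 * p u) →
      Integrable (fun u => p u * Real.log (p u)) →
      oneStepJ μ r rf lam x w b
          (gaussPdf (-(a * (rf * x - w)) / (a ^ 2 + σ ^ 2)) (lam / (2 * (a ^ 2 + σ ^ 2)))) ≤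
        oneStepJ μ r rf lam x w b p) ∧
    -- and the minimum value is the claimed one
    oneStepJ μ r rf lam x w b
        (gaussPdf (-(a * (rf * x - w)) / (a ^ 2 + σ ^ 2)) (lam / (2 * (a ^ 2 + σ ^ 2)))) =
      σ ^ 2 / (a ^ 2 + σ ^ 2) * (rf * x - w) ^ 2 +
        lam / 2 * Real.log ((a ^ 2 + σ ^ 2) / (Real.pi * lam)) - (w - b) ^ 2 :=
  stmt4_general μ r hmeas a σ rf lam x w b hσ hlam hr2 hra hrv
end

section
/- (Optimal value function of discrete-time exploratory MV) Define V_t(x) for t = T, T-1, …, 0 by the backward recursion V_T(x) = (x-w)² - (w-b)² and V_t(x) = min over probability densities π of { E[V_{t+1}(r_f x + r U)] + λ ∫ π(u) ln π(u) du }, where r has mean a, variance σ² > 0, and U ~ π is independent of r. Then for all 0 ≤ t ≤ T, V_t(x) = (σ²r_f²/(a²+σ²))^{T-t} (x - r_f^{-(T-t)} w)² + (λ/2)(T-t) ln((a²+σ²)/(πλ)) + (λ/2) Σ_{i=t+1}^{T} (T-i) ln(σ²r_f²/(a²+σ²)) - (w-b)². -/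
/-!
Each Bellman step maps a quadratic value function `K (y - m)² + C` to one of the same
shape. Integrating out `r` and completing the square in `U`, the objective becomes, up to
a constant, `K (a² + σ²) E[(U - c)²] + λ ∫ p ln p`. Gibbs' inequality against the Gaussian
density with mean `c` and variance `λ / (2 K (a² + σ²))` bounds this below by
`(λ/2) ln (K (a² + σ²) / (π λ))`, with equality at that Gaussian. Backward induction from
`V_T` then yields the closed form: each step multiplies `K` by `σ² r_f² / (a² + σ²)` and
adds a logarithmic constant.
-/

open MeasureTheory Real

/-- One step of the exploratory MV Bellman operator:
`E[Vnext(r_f x + r U)] + λ ∫ p ln p` with `U ~ p` independent of `r`. -/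
noncomputable def stepVal {Ω : Type*} [MeasurableSpace Ω] (μ : Measure Ω)
    (r : Ω → ℝ) (rf lam : ℝ) (Vnext : ℝ → ℝ) (x : ℝ) (p : ℝ → ℝ) : ℝ :=
  (∫ ω, ∫ u, Vnext (rf * x + r ω * u) * p u ∂volume ∂μ) +
    lam * ∫ u, p u * Real.log (p u)

open ProbabilityTheory
open scoped NNReal

lemma mul_log_add_sub_le_mul_log {p q : ℝ} (hp : 0 ≤ p) (hq : 0 < q) :
    p * log q + p - q ≤ p * log p := by
  rcases hp.eq_or_lt with rfl | hp
  · simp [hq.le]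
  · have h := mul_le_mul_of_nonneg_left (log_le_sub_one_of_pos (div_pos hq hp)) hp.le
    rw [log_div hq.ne' hp.ne', mul_sub, mul_sub, mul_div_cancel₀ _ hp.ne'] at h
    linarith

theorem integral_mul_log_le_integral_mul_log {α : Type*} [MeasurableSpace α] {μ : Measure α}
    {p q : α → ℝ} (hp : ∀ x, 0 ≤ p x) (hq : ∀ x, 0 < q x) (hpi : Integrable p μ)
    (hqi : Integrable q μ) (hpq : Integrable (fun x => p x * log (q x)) μ)
    (hpp : Integrable (fun x => p x * log (p x)) μ) (hmass : ∫ x, q x ∂μ = ∫ x, p x ∂μ) :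
    ∫ x, p x * log (q x) ∂μ ≤ ∫ x, p x * log (p x) ∂μ := by
  have h : ∫ x, (p x * log (q x) + p x - q x) ∂μ ≤ ∫ x, p x * log (p x) ∂μ :=
    integral_mono ((hpq.add hpi).sub hqi) hpp fun x => mul_log_add_sub_le_mul_log (hp x) (hq x)
  have hsum : Integrable (fun x => p x * log (q x) + p x) μ := hpq.add hpi
  rw [integral_sub hsum hqi, integral_add hpq hpi] at h
  linarith

namespace IsDensity

variable {p : ℝ → ℝ}

lemma integrable (hp : IsDensity p) : Integrable p :=
  Integrable.of_integral_ne_zero (hp.2 ▸ one_ne_zero)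

lemma integrable_id_mul (hp : IsDensity p) (h2 : Integrable (fun u => u ^ 2 * p u)) :
    Integrable (fun u => u * p u) := by
  refine ((hp.integrable.add h2).div_const 2).mono'
    (aestronglyMeasurable_id.mul hp.integrable.aestronglyMeasurable) (ae_of_all _ fun u => ?_)
  rw [norm_mul, norm_of_nonneg (hp.1 u), Real.norm_eq_abs]
  have : |u| ≤ (1 + u ^ 2) / 2 := by nlinarith [sq_nonneg (|u| - 1), sq_abs u]
  calc |u| * p u ≤ (1 + u ^ 2) / 2 * p u := mul_le_mul_of_nonneg_right this (hp.1 u)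
    _ = (p u + u ^ 2 * p u) / 2 := by ring

lemma integrable_quadratic_mul (hp : IsDensity p) (h2 : Integrable (fun u => u ^ 2 * p u))
    (A B D : ℝ) : Integrable (fun u => (A + B * u + D * u ^ 2) * p u) := by
  have h := ((hp.integrable.const_mul A).add ((hp.integrable_id_mul h2).const_mul B)).add
    (h2.const_mul D)
  exact h.congr (ae_of_all _ fun u => by simp only [Pi.add_apply]; ring)

lemma integral_quadratic_mul (hp : IsDensity p) (h2 : Integrable (fun u => u ^ 2 * p u))
    (A B D : ℝ) : ∫ u, (A + B * u + D * u ^ 2) * p u =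
      A + B * (∫ u, u * p u) + D * ∫ u, u ^ 2 * p u := by
  have h0 : Integrable (fun u => A * p u) := hp.integrable.const_mul A
  have h1 : Integrable (fun u => B * (u * p u)) := (hp.integrable_id_mul h2).const_mul B
  have h01 : Integrable (fun u => A * p u + B * (u * p u)) := h0.add h1
  calc ∫ u, (A + B * u + D * u ^ 2) * p u
      = ∫ u, (A * p u + B * (u * p u) + D * (u ^ 2 * p u)) := by congr 1; ext u; ring
    _ = A + B * (∫ u, u * p u) + D * ∫ u, u ^ 2 * p u := by
      rw [integral_add h01 (h2.const_mul D), integral_add h0 h1, integral_const_mul,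
        integral_const_mul, integral_const_mul, hp.2, mul_one]

lemma integrable_sub_sq_mul (hp : IsDensity p) (h2 : Integrable (fun u => u ^ 2 * p u))
    (m : ℝ) : Integrable (fun u => (u - m) ^ 2 * p u) :=
  (hp.integrable_quadratic_mul h2 (m ^ 2) (-2 * m) 1).congr (ae_of_all _ fun u => by ring)

end IsDensity

section Gaussian

variable {m : ℝ} {v : ℝ≥0}

lemma mul_log_gaussianPDFReal (hv : v ≠ 0) (c x : ℝ) :
    c * log (gaussianPDFReal m v x) = -log (2 * π * v) / 2 * c - (x - m) ^ 2 * c / (2 * v) := by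
  rw [gaussianPDFReal, log_mul (by positivity) (exp_pos _).ne', log_inv, log_exp,
    log_sqrt (by positivity)]
  ring

lemma integrable_gaussianPDFReal_mul (hv : v ≠ 0) {f : ℝ → ℝ}
    (hf : Integrable f (gaussianReal m v)) :
    Integrable (fun x => gaussianPDFReal m v x * f x) := by
  rw [gaussianReal_of_var_ne_zero _ hv, integrable_withDensity_iff_integrable_smul'
    (measurable_gaussianPDF m v) (ae_of_all _ fun _ => gaussianPDF_lt_top)] at hf
  simpa [toReal_gaussianPDF] using hf

lemma integrable_sq_mul_gaussianPDFReal (hv : v ≠ 0) :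
    Integrable (fun x => x ^ 2 * gaussianPDFReal m v x) := by
  have h := (memLp_two_iff_integrable_sq aestronglyMeasurable_id).1
    (memLp_id_gaussianReal (μ := m) (v := v) 2)
  simpa [mul_comm] using integrable_gaussianPDFReal_mul hv h

lemma integral_sub_sq_mul_gaussianPDFReal (hv : v ≠ 0) :
    ∫ x, (x - m) ^ 2 * gaussianPDFReal m v x = v := by
  have h := variance_fun_id_gaussianReal (μ := m) (v := v)
  rw [variance_eq_integral measurable_id'.aemeasurable, integral_id_gaussianReal,
    integral_gaussianReal_eq_integral_smul hv] at h
  simpa [mul_comm] using h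

lemma isDensity_gaussianPDFReal (m : ℝ) (hv : v ≠ 0) : IsDensity (gaussianPDFReal m v) :=
  ⟨gaussianPDFReal_nonneg m v, integral_gaussianPDFReal_eq_one m hv⟩

lemma integrable_gaussianPDFReal_mul_log (hv : v ≠ 0) :
    Integrable (fun x => gaussianPDFReal m v x * log (gaussianPDFReal m v x)) := by
  simp_rw [mul_log_gaussianPDFReal hv]
  exact ((integrable_gaussianPDFReal m v).const_mul _).sub
    (((isDensity_gaussianPDFReal m hv).integrable_sub_sq_mul
      (integrable_sq_mul_gaussianPDFReal hv) m).div_const _)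

lemma integral_gaussianPDFReal_mul_log (hv : v ≠ 0) :
    ∫ x, gaussianPDFReal m v x * log (gaussianPDFReal m v x) = -log (2 * π * v) / 2 - 1 / 2 := by
  simp_rw [mul_log_gaussianPDFReal hv]
  rw [integral_sub ((integrable_gaussianPDFReal m v).const_mul _)
    (((isDensity_gaussianPDFReal m hv).integrable_sub_sq_mul
      (integrable_sq_mul_gaussianPDFReal hv) m).div_const _), integral_const_mul, integral_div,
    integral_gaussianPDFReal_eq_one m hv, integral_sub_sq_mul_gaussianPDFReal hv]
  field_simp

end Gaussian

/-- The Gaussian maximises entropy under a second-moment constraint. -/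
theorem IsDensity.neg_log_sub_le_integral_mul_log {p : ℝ → ℝ} (hp : IsDensity p)
    (h2 : Integrable (fun u => u ^ 2 * p u)) (hl : Integrable (fun u => p u * log (p u)))
    (m : ℝ) {v : ℝ≥0} (hv : v ≠ 0) :
    -log (2 * π * v) / 2 - (∫ u, (u - m) ^ 2 * p u) / (2 * v) ≤ ∫ u, p u * log (p u) := by
  have hsq := hp.integrable_sub_sq_mul h2 m
  have hcross : ∀ u, p u * log (gaussianPDFReal m v u) =
      -log (2 * π * v) / 2 * p u - (1 / (2 * v)) * ((u - m) ^ 2 * p u) := fun u => by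
    rw [mul_log_gaussianPDFReal hv]; ring
  have hgibbs := integral_mul_log_le_integral_mul_log hp.1 (gaussianPDFReal_pos m v · hv)
    hp.integrable (integrable_gaussianPDFReal m v)
    (by simp_rw [hcross]; exact (hp.integrable.const_mul _).sub (hsq.const_mul _)) hl
    (by rw [integral_gaussianPDFReal_eq_one m hv, hp.2])
  simp_rw [hcross] at hgibbs
  rw [integral_sub (hp.integrable.const_mul _) (hsq.const_mul _), integral_const_mul,
    integral_const_mul, hp.2, mul_one, one_div_mul_eq_div] at hgibbs
  exact hgibbs

lemma integral_quadratic {Ω : Type*} [MeasurableSpace Ω] {μ : Measure Ω}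
    [IsProbabilityMeasure μ] {X : Ω → ℝ} (hX : AEStronglyMeasurable X μ)
    (h2 : Integrable (fun ω => X ω ^ 2) μ) (A B D : ℝ) : ∫ ω, (A + B * X ω + D * X ω ^ 2) ∂μ =
      A + B * (∫ ω, X ω ∂μ) + D * ∫ ω, X ω ^ 2 ∂μ := by
  have h1 : Integrable X μ := ((memLp_two_iff_integrable_sq hX).2 h2).integrable one_le_two
  have h01 : Integrable (fun ω => A + B * X ω) μ := (integrable_const A).add (h1.const_mul B)
  rw [integral_add h01 (h2.const_mul D), integral_add (integrable_const A) (h1.const_mul B),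
    integral_const, integral_const_mul, integral_const_mul, probReal_univ, one_smul]

theorem stepVal_sq_add_const {Ω : Type*} [MeasurableSpace Ω] (μ : Measure Ω)
    [IsProbabilityMeasure μ] {r : Ω → ℝ} (hmeas : Measurable r) {a σ : ℝ} (hσ : 0 < σ)
    (hra : ∫ ω, r ω ∂μ = a) (hrv : ∫ ω, r ω ^ 2 ∂μ = a ^ 2 + σ ^ 2) (rf lam K m C x : ℝ)
    {p : ℝ → ℝ} (hp : IsDensity p) (h2 : Integrable (fun u => u ^ 2 * p u)) :
    stepVal μ r rf lam (fun y => K * (y - m) ^ 2 + C) x p =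
      K * σ ^ 2 / (a ^ 2 + σ ^ 2) * (rf * x - m) ^ 2 + C +
      K * (a ^ 2 + σ ^ 2) * (∫ u, (u - a * (m - rf * x) / (a ^ 2 + σ ^ 2)) ^ 2 * p u) +
      lam * ∫ u, p u * log (p u) := by
  have hr2 : Integrable (fun ω => r ω ^ 2) μ :=
    Integrable.of_integral_ne_zero (by rw [hrv]; positivity)
  set M₁ := ∫ u, u * p u
  set M₂ := ∫ u, u ^ 2 * p u
  have hinner : ∀ ω, ∫ u, (K * (rf * x + r ω * u - m) ^ 2 + C) * p u =
      (K * (rf * x - m) ^ 2 + C) + 2 * K * (rf * x - m) * M₁ * r ω + K * M₂ * r ω ^ 2 := by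
    intro ω
    calc _ = ∫ u, (K * (rf * x - m) ^ 2 + C + 2 * K * (rf * x - m) * r ω * u +
          K * r ω ^ 2 * u ^ 2) * p u := by congr 1; ext u; ring
      _ = _ := by rw [hp.integral_quadratic_mul h2]; ring
  have hshift (c : ℝ) : ∫ u, (u - c) ^ 2 * p u = c ^ 2 - 2 * c * M₁ + M₂ := by
    calc _ = ∫ u, (c ^ 2 + (-2 * c) * u + 1 * u ^ 2) * p u := by congr 1; ext u; ring
      _ = _ := by rw [hp.integral_quadratic_mul h2]; ring
  unfold stepVal
  simp_rw [hinner]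
  rw [integral_quadratic hmeas.aestronglyMeasurable hr2, hra, hrv, hshift]
  field_simp
  ring

theorem sInf_stepVal_sq_add_const {Ω : Type*} [MeasurableSpace Ω] (μ : Measure Ω)
    [IsProbabilityMeasure μ] {r : Ω → ℝ} (hmeas : Measurable r) {a σ lam : ℝ} (hσ : 0 < σ)
    (hlam : 0 < lam) (hra : ∫ ω, r ω ∂μ = a) (hrv : ∫ ω, r ω ^ 2 ∂μ = a ^ 2 + σ ^ 2)
    (rf : ℝ) {K : ℝ} (hK : 0 < K) (m C x : ℝ) :
    sInf {J : ℝ | ∃ p : ℝ → ℝ, IsDensity p ∧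
        Integrable (fun u => u ^ 2 * p u) ∧
        Integrable (fun u => p u * Real.log (p u)) ∧
        J = stepVal μ r rf lam (fun y => K * (y - m) ^ 2 + C) x p} =
      K * σ ^ 2 / (a ^ 2 + σ ^ 2) * (rf * x - m) ^ 2 + C +
        lam / 2 * log (K * (a ^ 2 + σ ^ 2) / (π * lam)) := by
  set α := K * (a ^ 2 + σ ^ 2)
  have hα : 0 < α := by positivity
  set c := a * (m - rf * x) / (a ^ 2 + σ ^ 2)
  -- the optimal density is Gaussian with mean `c` and variance `lam / (2 * α)`
  set v : ℝ≥0 := ⟨lam / (2 * α), by positivity⟩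
  have hv_coe : (v : ℝ) = lam / (2 * α) := rfl
  have hv : v ≠ 0 := by rw [← NNReal.coe_ne_zero, hv_coe]; positivity
  have hlog : log (2 * π * v) = -log (α / (π * lam)) := by
    rw [← log_inv, hv_coe]
    congr 1
    field_simp
  refine IsLeast.csInf_eq ⟨⟨gaussianPDFReal c v, isDensity_gaussianPDFReal c hv,
    integrable_sq_mul_gaussianPDFReal hv, integrable_gaussianPDFReal_mul_log hv, ?_⟩, ?_⟩
  · rw [stepVal_sq_add_const μ hmeas hσ hra hrv rf lam K m C x (isDensity_gaussianPDFReal c hv)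
      (integrable_sq_mul_gaussianPDFReal hv), integral_sub_sq_mul_gaussianPDFReal hv,
      integral_gaussianPDFReal_mul_log hv, hlog, hv_coe]
    field_simp
    ring
  · rintro J ⟨p, hp, h2, hl, rfl⟩
    rw [stepVal_sq_add_const μ hmeas hσ hra hrv rf lam K m C x hp h2]
    have h := mul_le_mul_of_nonneg_left
      (hp.neg_log_sub_le_integral_mul_log h2 hl c hv) hlam.le
    rw [hlog, hv_coe] at h
    have hsimp : lam * (-(-log (α / (π * lam))) / 2 -
        (∫ u, (u - c) ^ 2 * p u) / (2 * (lam / (2 * α)))) =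
        lam / 2 * log (α / (π * lam)) - α * ∫ u, (u - c) ^ 2 * p u := by
      field_simp
    linarith

noncomputable def mvValue (a σ rf lam w b : ℝ) (T t : ℕ) (x : ℝ) : ℝ :=
  (σ ^ 2 * rf ^ 2 / (a ^ 2 + σ ^ 2)) ^ (T - t) * (x - (rf⁻¹) ^ (T - t) * w) ^ 2 +
    lam / 2 * ((T : ℝ) - t) * Real.log ((a ^ 2 + σ ^ 2) / (Real.pi * lam)) +
    lam / 2 * (∑ i ∈ Finset.Icc (t + 1) T,
      ((T : ℝ) - i) * Real.log (σ ^ 2 * rf ^ 2 / (a ^ 2 + σ ^ 2))) -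
    (w - b) ^ 2

section mvValue

variable {a σ rf lam w b : ℝ} {T t : ℕ}

lemma mvValue_eq_sq_add (x : ℝ) :
    mvValue a σ rf lam w b T t x =
      (σ ^ 2 * rf ^ 2 / (a ^ 2 + σ ^ 2)) ^ (T - t) * (x - (rf⁻¹) ^ (T - t) * w) ^ 2 +
      mvValue a σ rf lam w b T t ((rf⁻¹) ^ (T - t) * w) := by
  simp only [mvValue, sub_self, ne_eq, OfNat.ofNat_ne_zero, not_false_eq_true, zero_pow,
    mul_zero, zero_add]
  ring

lemma mvValue_bellman (hσ : 0 < σ) (hlam : 0 < lam) (hrf : 0 < rf) (ht : t < T) (x : ℝ) :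
    (σ ^ 2 * rf ^ 2 / (a ^ 2 + σ ^ 2)) ^ (T - (t + 1)) * σ ^ 2 / (a ^ 2 + σ ^ 2) *
        (rf * x - (rf⁻¹) ^ (T - (t + 1)) * w) ^ 2 +
      mvValue a σ rf lam w b T (t + 1) ((rf⁻¹) ^ (T - (t + 1)) * w) +
      lam / 2 * log ((σ ^ 2 * rf ^ 2 / (a ^ 2 + σ ^ 2)) ^ (T - (t + 1)) * (a ^ 2 + σ ^ 2) /
        (π * lam)) =
    mvValue a σ rf lam w b T t x := by
  obtain ⟨n, rfl⟩ : ∃ n, T = t + 1 + n := ⟨T - (t + 1), by omega⟩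
  have hn : t + 1 + n - (t + 1) = n := by omega
  have hn' : t + 1 + n - t = n + 1 := by omega
  have hlog : log ((σ ^ 2 * rf ^ 2 / (a ^ 2 + σ ^ 2)) ^ n * (a ^ 2 + σ ^ 2) / (π * lam)) =
      n * log (σ ^ 2 * rf ^ 2 / (a ^ 2 + σ ^ 2)) + log ((a ^ 2 + σ ^ 2) / (π * lam)) := by
    rw [mul_div_assoc, log_mul (by positivity) (by positivity), log_pow]
  simp only [mvValue, hn, hn', hlog, sub_self, ne_eq, OfNat.ofNat_ne_zero, not_false_eq_true,
    zero_pow, mul_zero, zero_add]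
  rw [← Finset.insert_Icc_add_one_left_eq_Icc (by omega : t + 1 ≤ t + 1 + n),
    Finset.sum_insert (by simp)]
  have hquad : (σ ^ 2 * rf ^ 2 / (a ^ 2 + σ ^ 2)) ^ n * σ ^ 2 / (a ^ 2 + σ ^ 2) *
      (rf * x - rf⁻¹ ^ n * w) ^ 2 =
      (σ ^ 2 * rf ^ 2 / (a ^ 2 + σ ^ 2)) ^ (n + 1) * (x - rf⁻¹ ^ (n + 1) * w) ^ 2 := by
    have : rf * x - rf⁻¹ ^ n * w = rf * (x - rf⁻¹ ^ (n + 1) * w) := by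
      rw [pow_succ]
      field_simp
    rw [this]
    ring
  rw [hquad]
  push_cast
  ring

end mvValue

theorem stmt5_general {Ω : Type*} [MeasurableSpace Ω] (μ : Measure Ω) [IsProbabilityMeasure μ]
    (r : Ω → ℝ) (hmeas : Measurable r)
    (a σ rf lam w b : ℝ) (hσ : 0 < σ) (hlam : 0 < lam) (hrf : 0 < rf)
    (hra : ∫ ω, r ω ∂μ = a) (hrv : ∫ ω, (r ω) ^ 2 ∂μ = a ^ 2 + σ ^ 2)
    (T : ℕ) (V : ℕ → ℝ → ℝ)
    (hVT : ∀ x, V T x = (x - w) ^ 2 - (w - b) ^ 2)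
    (hrec : ∀ t < T, ∀ x, V t x =
      sInf {J : ℝ | ∃ p : ℝ → ℝ, IsDensity p ∧
        Integrable (fun u => u ^ 2 * p u) ∧
        Integrable (fun u => p u * Real.log (p u)) ∧
        J = stepVal μ r rf lam (V (t + 1)) x p}) :
    ∀ t ≤ T, ∀ x, V t x =
      (σ ^ 2 * rf ^ 2 / (a ^ 2 + σ ^ 2)) ^ (T - t) * (x - (rf⁻¹) ^ (T - t) * w) ^ 2 +
      lam / 2 * ((T : ℝ) - t) * Real.log ((a ^ 2 + σ ^ 2) / (Real.pi * lam)) +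
      lam / 2 * (∑ i ∈ Finset.Icc (t + 1) T,
        ((T : ℝ) - i) * Real.log (σ ^ 2 * rf ^ 2 / (a ^ 2 + σ ^ 2))) -
      (w - b) ^ 2 := by
  change ∀ t ≤ T, ∀ x, V t x = mvValue a σ rf lam w b T t x
  intro t ht
  induction ht using Nat.decreasingInduction with
  | self => intro x; simp [hVT, mvValue]
  | of_succ t ht ih =>
    intro x
    have hV : V (t + 1) = fun y => (σ ^ 2 * rf ^ 2 / (a ^ 2 + σ ^ 2)) ^ (T - (t + 1)) *
        (y - (rf⁻¹) ^ (T - (t + 1)) * w) ^ 2 +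
        mvValue a σ rf lam w b T (t + 1) ((rf⁻¹) ^ (T - (t + 1)) * w) :=
      funext fun y => (ih y).trans (mvValue_eq_sq_add y)
    rw [hrec t ht x, hV, sInf_stepVal_sq_add_const μ hmeas hσ hlam hra hrv rf (by positivity),
      mvValue_bellman hσ hlam hrf ht]

/-- Optimal value function of the discrete-time exploratory mean-variance problem. -/
theorem stmt5 {Ω : Type*} [MeasurableSpace Ω] (μ : Measure Ω) [IsProbabilityMeasure μ]
    (r : Ω → ℝ) (hmeas : Measurable r)
    (a σ rf lam w b : ℝ) (hσ : 0 < σ) (hlam : 0 < lam) (hrf : 0 < rf)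
    (hra : ∫ ω, r ω ∂μ = a) (hrv : ∫ ω, (r ω) ^ 2 ∂μ = a ^ 2 + σ ^ 2)
    (T : ℕ) (hT : 0 < T) (V : ℕ → ℝ → ℝ)
    (hVT : ∀ x, V T x = (x - w) ^ 2 - (w - b) ^ 2)
    (hrec : ∀ t < T, ∀ x, V t x =
      sInf {J : ℝ | ∃ p : ℝ → ℝ, IsDensity p ∧
        Integrable (fun u => u ^ 2 * p u) ∧
        Integrable (fun u => p u * Real.log (p u)) ∧
        J = stepVal μ r rf lam (V (t + 1)) x p}) :
    ∀ t ≤ T, ∀ x, V t x =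
      (σ ^ 2 * rf ^ 2 / (a ^ 2 + σ ^ 2)) ^ (T - t) * (x - (rf⁻¹) ^ (T - t) * w) ^ 2 +
      lam / 2 * ((T : ℝ) - t) * Real.log ((a ^ 2 + σ ^ 2) / (Real.pi * lam)) +
      lam / 2 * (∑ i ∈ Finset.Icc (t + 1) T,
        ((T : ℝ) - i) * Real.log (σ ^ 2 * rf ^ 2 / (a ^ 2 + σ ^ 2))) -
      (w - b) ^ 2 :=
  stmt5_general μ r hmeas a σ rf lam w b hσ hlam hrf hra hrv T V hVT hrec
end
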